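/- If f_0(i) = 1 for all i ≥ 1, and c_m is the k-fold convolution array of the (m-1)-st invert transform f_{m-1} of f_0, then f_{m-1}(n) = m^{n-1} and c_m(n,k) = m^{n-k} · C(n-1, k-1) for all 1 ≤ k ≤ n. -/

import Mathlib

/-!
Splitting off the first part, the invert transform sends the geometric sequence `c ^ (n - 1)` to
`(c + 1) ^ (n - 1)`, by the identity `x ^ (n + 1) + ∑_{i + j = n} x ^ i (x + 1) ^ j = (x + 1) ^ (n + 1)`;
starting from `f₀ = 1` this gives `f_{m-1}(n) = m ^ (n - 1)`. Every composition of `n` into `k`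
parts then contributes `m ^ (n - k)` to `c_m(n, k)`, and the number of such compositions is
`C(n - 1, k - 1)`: splitting off the first part again reduces this to the hockey-stick identity.
-/

/-- The invert transform: `invT g n = g n + ∑_{j=1}^{n-1} g j * invT g (n-j)`. -/
def invT (g : ℕ → ℤ) : ℕ → ℤ
  | n => g n + ∑ j ∈ (Finset.Ico 1 n).attach, g j.1 * invT g (n - j.1)
decreasing_by
  have h := Finset.mem_Ico.mp j.2
  omega

/-- Compositions of `n` into `k` positive parts. -/
def comps (k n : ℕ) : Finset (Fin k → ℕ) :=
  (Finset.Nat.antidiagonalTuple k n).filter fun f => ∀ i, 0 < f i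

/-- The `k`-fold convolution array of `g`:
sum over compositions of `n` into `k` positive parts of the products of values of `g`. -/
def compArr (g : ℕ → ℤ) (n k : ℕ) : ℤ :=
  ∑ f ∈ comps k n, ∏ i, g (f i)

open Finset Finset.Nat

lemma invT_eq (g : ℕ → ℤ) (n : ℕ) :
    invT g n = g n + ∑ j ∈ Ico 1 n, g j * invT g (n - j) := by
  rw [invT, sum_attach (Ico 1 n) fun j => g j * invT g (n - j)]

lemma invT_add_two (g : ℕ → ℤ) (n : ℕ) :
    invT g (n + 2) = g (n + 2) + ∑ p ∈ antidiagonal n, g (p.1 + 1) * invT g (p.2 + 1) := by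
  rw [invT_eq, sum_Ico_eq_sum_range, sum_antidiagonal_eq_sum_range_succ_mk]
  congr 1
  refine sum_congr rfl fun i hi => ?_
  have hin : i < n + 1 := mem_range.mp hi
  rw [add_comm 1 i, show n + 2 - (i + 1) = n - i + 1 by omega]

lemma pow_succ_add_sum_antidiagonal {R : Type*} [CommSemiring R] (x : R) (n : ℕ) :
    x ^ (n + 1) + ∑ p ∈ antidiagonal n, x ^ p.1 * (x + 1) ^ p.2 = (x + 1) ^ (n + 1) := by
  have h := geom_sum₂_mul_add 1 x (n + 1)
  rw [← sum_antidiagonal_swap, sum_antidiagonal_eq_sum_range_succ_mk]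
  simp only [Prod.swap, Nat.add_sub_cancel, mul_one, add_comm 1 x] at h ⊢
  rw [← h, add_comm (x ^ (n + 1))]
  exact congrArg (· + _) (sum_congr rfl fun i _ => mul_comm _ _)

lemma invT_geometric (c : ℤ) : invT (fun n => c ^ (n - 1)) = fun n => (c + 1) ^ (n - 1) := by
  funext n
  induction n using Nat.strong_induction_on with
  | _ n ih =>
    match n with
    | 0 | 1 => rw [invT_eq]; simp
    | n + 2 =>
      rw [invT_add_two, sum_congr rfl fun p hp => by
        rw [ih (p.2 + 1) (by have := mem_antidiagonal.mp hp; omega)]]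
      simpa using pow_succ_add_sum_antidiagonal c n

lemma iterate_invT_const_one (t : ℕ) :
    invT^[t] (fun _ => 1) = fun n => ((t : ℤ) + 1) ^ (n - 1) := by
  induction t with
  | zero => simp
  | succ t ih => rw [Function.iterate_succ_apply', ih, invT_geometric, Nat.cast_succ]

lemma mem_comps {k n : ℕ} {f : Fin k → ℕ} : f ∈ comps k n ↔ ∑ i, f i = n ∧ ∀ i, 0 < f i := by
  simp [comps, mem_antidiagonalTuple]

lemma compArr_zero_succ (g : ℕ → ℤ) (k : ℕ) : compArr g 0 (k + 1) = 0 := by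
  simp [compArr, comps, antidiagonalTuple_zero_right, filter_singleton]

lemma compArr_succ_one (g : ℕ → ℤ) (n : ℕ) : compArr g (n + 1) 1 = g (n + 1) := by
  simp [compArr, comps, antidiagonalTuple_one, filter_singleton]

lemma compArr_geometric (c : ℤ) (n k : ℕ) :
    compArr (fun i => c ^ (i - 1)) n k = c ^ (n - k) * compArr (fun _ => 1) n k := by
  rw [compArr, compArr, mul_sum]
  refine sum_congr rfl fun f hf => ?_
  obtain ⟨hsum, hpos⟩ := mem_comps.mp hf
  rw [prod_pow_eq_pow_sum, sum_tsub_distrib _ fun i _ => hpos i, hsum]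
  simp

lemma compArr_succ_succ (g : ℕ → ℤ) (n k : ℕ) :
    compArr g (n + 1) (k + 1) = ∑ p ∈ antidiagonal n, g (p.1 + 1) * compArr g p.2 k := by
  simp_rw [compArr, mul_sum]
  rw [sum_sigma']
  symm
  refine sum_nbij' (fun x => Fin.cons (x.1.1 + 1) x.2)
    (fun f => ⟨(f 0 - 1, ∑ i, Fin.tail f i), Fin.tail f⟩) ?_ ?_ ?_ ?_ ?_
  · rintro ⟨p, f⟩ hx
    obtain ⟨hp, hf⟩ := mem_sigma.mp hx
    obtain ⟨hsum, hpos⟩ := mem_comps.mp hf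
    refine mem_comps.mpr ⟨?_, Fin.cases (Nat.succ_pos _) hpos⟩
    rw [Fin.sum_cons, hsum, ← mem_antidiagonal.mp hp]
    ring
  · intro f hf
    obtain ⟨hsum, hpos⟩ := mem_comps.mp hf
    rw [Fin.sum_univ_succ] at hsum
    have h0 := hpos 0
    refine mem_sigma.mpr ⟨mem_antidiagonal.mpr (by simp only [Fin.tail]; omega),
      mem_comps.mpr ⟨rfl, fun i => hpos i.succ⟩⟩
  · rintro ⟨p, f⟩ hx
    simp [(mem_comps.mp (mem_sigma.mp hx).2).1]
  · intro f hf
    simp [Nat.sub_add_cancel ((mem_comps.mp hf).2 0)]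
  · rintro ⟨p, f⟩ -
    simp [Fin.prod_univ_succ]

lemma sum_range_choose_eq_choose_succ (n k : ℕ) :
    ∑ i ∈ range (n + 1), i.choose k = (n + 1).choose (k + 1) := by
  rw [← Nat.sum_Icc_choose]
  refine (sum_subset (fun i hi => ?_) fun i hi hi' => Nat.choose_eq_zero_of_lt ?_).symm
  · simp only [mem_Icc, mem_range] at hi ⊢
    omega
  · simp only [mem_Icc, mem_range, not_and, not_le] at hi hi'
    omega

lemma compArr_const_one (n k : ℕ) : compArr (fun _ => 1) (n + 1) (k + 1) = n.choose k := by
  induction k generalizing n with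
  | zero => simp [compArr_succ_one]
  | succ k ih =>
    rw [compArr_succ_succ]
    cases n with
    | zero => simp [compArr_zero_succ]
    | succ n =>
      simp only [sum_antidiagonal_succ', compArr_zero_succ, one_mul, zero_add, ih]
      rw [← sum_antidiagonal_swap, sum_antidiagonal_eq_sum_range_succ_mk]
      exact_mod_cast sum_range_choose_eq_choose_succ n k

theorem stmt7 (m n k : ℕ) (hm : 1 ≤ m) (hk : 1 ≤ k) (hkn : k ≤ n) :
    (invT^[m - 1] (fun _ => (1 : ℤ))) n = (m : ℤ) ^ (n - 1) ∧
    compArr (invT^[m - 1] (fun _ => (1 : ℤ))) n k =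
      (m : ℤ) ^ (n - k) * ((n - 1).choose (k - 1)) := by
  have hf : invT^[m - 1] (fun _ => (1 : ℤ)) = fun i => (m : ℤ) ^ (i - 1) := by
    rw [iterate_invT_const_one, Nat.cast_pred hm, sub_add_cancel]
  obtain ⟨k, rfl⟩ : ∃ k', k = k' + 1 := ⟨k - 1, by omega⟩
  obtain ⟨n, rfl⟩ : ∃ n', n = n' + 1 := ⟨n - 1, by omega⟩
  rw [hf, compArr_geometric, compArr_const_one]
  simp
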